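/- arXiv:2211.07767 — 2 statements merged into one kernel-verified Lean document; each statement's English description precedes it below -/
import Mathlib

section
/- Let a ≤ b be real numbers and let X be a real random variable with values in [a, b] almost surely. Define recursively F₁(X; η) = P(X ≤ η) and, for k ≥ 2, F_k(X; η) = ∫_{-∞}^{η} F_{k−1}(X; α) dα. Then for every integer k ≥ 2 and every η ∈ ℝ, F_k(X; η) = (1/(k−1)!) · E[((η − X)₊)^{k−1}], where (t)₊ denotes max(t, 0). -/
/-!
Write `K_n(x, α) = 1_{x ≤ α} (α - x)^n / n!`, so that `F₁(X; η) = E[K₀(X, η)]` and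
`∫_{-∞}^η K_n(x, α) dα = K_{n+1}(x, η)`. Since `X ≥ a` almost surely, `K_n(X, α)` is bounded for
fixed `α`, and Tonelli's theorem lets the recursive integral pass under the expectation:
by induction `F_{n+1}(X; η) = E[K_n(X, η)]`, which for `n ≥ 1` is the claimed formula.
-/

open MeasureTheory Set
open scoped Nat

section TonelliReal

variable {α β : Type*} [MeasurableSpace α] [MeasurableSpace β] {μ : Measure α} {ν : Measure β}
  [SFinite μ] [SFinite ν]

theorem integral_integral_swap_of_nonneg {f : α → β → ℝ} (hf : Measurable (Function.uncurry f))
    (hf_nonneg : ∀ x y, 0 ≤ f x y) (hf_left : ∀ x, Integrable (f x) ν)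
    (hf_right : ∀ y, Integrable (fun x => f x y) μ) :
    ∫ x, ∫ y, f x y ∂ν ∂μ = ∫ y, ∫ x, f x y ∂μ ∂ν := by
  have hf' : Measurable (Function.uncurry fun x y => ENNReal.ofReal (f x y)) := hf.ennreal_ofReal
  have h_left : ∀ x, ∫ y, f x y ∂ν = (∫⁻ y, ENNReal.ofReal (f x y) ∂ν).toReal := fun x =>
    integral_eq_lintegral_of_nonneg_ae (ae_of_all _ (hf_nonneg x)) (hf_left x).aestronglyMeasurable
  have h_right : ∀ y, ∫ x, f x y ∂μ = (∫⁻ x, ENNReal.ofReal (f x y) ∂μ).toReal := fun y =>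
    integral_eq_lintegral_of_nonneg_ae (ae_of_all _ (hf_nonneg · y))
      (hf_right y).aestronglyMeasurable
  have hm_left : Measurable fun x => ∫⁻ y, ENNReal.ofReal (f x y) ∂ν :=
    hf'.lintegral_prod_right'
  have hm_right : Measurable fun y => ∫⁻ x, ENNReal.ofReal (f x y) ∂μ :=
    hf'.lintegral_prod_left'
  simp_rw [h_left, h_right]
  rw [integral_toReal hm_left.aemeasurable (ae_of_all _ fun x => (hf_left x).lintegral_lt_top),
    integral_toReal hm_right.aemeasurable (ae_of_all _ fun y => (hf_right y).lintegral_lt_top),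
    lintegral_lintegral_swap hf'.aemeasurable]

end TonelliReal

/-- For `n = 0` this is the step function `1_{x ≤ α}`, not the constant `(α - x)₊ ^ 0 = 1`. -/
noncomputable def truncPow (n : ℕ) (x : ℝ) : ℝ → ℝ :=
  (Ici x).indicator fun α => (α - x) ^ n / n !

namespace truncPow

theorem nonneg (n : ℕ) (x α : ℝ) : 0 ≤ truncPow n x α := by
  unfold truncPow
  by_cases h : x ≤ α
  · rw [indicator_of_mem (mem_Ici.2 h)]
    have : 0 ≤ α - x := sub_nonneg.2 h
    positivity
  · rw [indicator_of_notMem (by simpa using h)]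

theorem succ_apply (n : ℕ) (x α : ℝ) :
    truncPow (n + 1) x α = max (α - x) 0 ^ (n + 1) / (n + 1)! := by
  unfold truncPow
  by_cases h : x ≤ α
  · rw [indicator_of_mem (mem_Ici.2 h), max_eq_left (sub_nonneg.2 h)]
  · rw [indicator_of_notMem (by simpa using h), max_eq_right (by linarith)]
    simp

theorem antitone_left (n : ℕ) (α : ℝ) : Antitone fun x => truncPow n x α := by
  intro x y hxy
  by_cases hy : y ≤ α
  · simp only [truncPow, indicator_of_mem (mem_Ici.2 hy),
      indicator_of_mem (mem_Ici.2 (hxy.trans hy))]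
    have : 0 ≤ α - y := sub_nonneg.2 hy
    gcongr
  · simp only [truncPow, indicator_of_notMem (show α ∉ Ici y by simpa using hy)]
    exact nonneg n x α

theorem measurable_uncurry (n : ℕ) : Measurable (Function.uncurry (truncPow n)) := by
  have : Function.uncurry (truncPow n) =
      {p : ℝ × ℝ | p.1 ≤ p.2}.indicator fun p => (p.2 - p.1) ^ n / n ! := by
    ext p
    simp only [Function.uncurry, truncPow, indicator, mem_Ici, mem_ofPred_eq]
  rw [this]
  exact Measurable.indicator (by fun_prop) (measurableSet_le measurable_fst measurable_snd)

theorem setIntegral_Iic (n : ℕ) (x η : ℝ) :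
    ∫ α in Iic η, truncPow n x α = truncPow (n + 1) x η := by
  rw [truncPow, setIntegral_indicator measurableSet_Ici, inter_comm, Ici_inter_Iic,
    integral_Icc_eq_integral_Ioc]
  by_cases h : x ≤ η
  · rw [← intervalIntegral.integral_of_le h, intervalIntegral.integral_div,
      intervalIntegral.integral_comp_sub_right (fun t => t ^ n), integral_pow,
      truncPow, indicator_of_mem (mem_Ici.2 h), Nat.factorial_succ]
    push_cast
    field_simp
    ring
  · rw [Ioc_eq_empty_of_le (not_le.1 h).le, truncPow, indicator_of_notMem (by simpa using h)]
    simp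

theorem integrableOn_Iic (n : ℕ) (x η : ℝ) : IntegrableOn (truncPow n x) (Iic η) := by
  rw [truncPow, integrableOn_indicator_iff measurableSet_Ici, Ici_inter_Iic]
  exact (by fun_prop : Continuous fun α : ℝ => (α - x) ^ n / n !).integrableOn_Icc

end truncPow

section Expectation

variable {Ω : Type*} [MeasurableSpace Ω] {P : Measure Ω} {X : Ω → ℝ}

theorem integrable_truncPow_comp [IsFiniteMeasure P] {a : ℝ} (hX : Measurable X)
    (ha : ∀ᵐ ω ∂P, a ≤ X ω) (n : ℕ) (α : ℝ) : Integrable (fun ω => truncPow n (X ω) α) P := by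
  have hm : Measurable fun ω => truncPow n (X ω) α :=
    (truncPow.measurable_uncurry n).comp (hX.prodMk measurable_const)
  refine .of_bound hm.aestronglyMeasurable (truncPow n a α) ?_
  filter_upwards [ha] with ω hω
  rw [Real.norm_of_nonneg (truncPow.nonneg n _ α)]
  exact truncPow.antitone_left n α hω

theorem setIntegral_Iic_integral_truncPow_comp [IsFiniteMeasure P] {a : ℝ} (hX : Measurable X)
    (ha : ∀ᵐ ω ∂P, a ≤ X ω) (n : ℕ) (η : ℝ) :
    ∫ α in Iic η, ∫ ω, truncPow n (X ω) α ∂P = ∫ ω, truncPow (n + 1) (X ω) η ∂P := by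
  rw [integral_integral_swap_of_nonneg (f := fun α ω => truncPow n (X ω) α)
    ((truncPow.measurable_uncurry n).comp ((hX.comp measurable_snd).prodMk measurable_fst))
    (fun α ω => truncPow.nonneg n (X ω) α) (integrable_truncPow_comp hX ha n)
    (fun ω => truncPow.integrableOn_Iic n (X ω) η)]
  simp_rw [truncPow.setIntegral_Iic]

theorem measureReal_le_eq_integral_truncPow_zero (hX : Measurable X) (η : ℝ) :
    P.real {ω | X ω ≤ η} = ∫ ω, truncPow 0 (X ω) η ∂P := by
  change P.real (X ⁻¹' Iic η) = _
  rw [← integral_indicator_one (hX measurableSet_Iic)]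
  congr with ω
  simp [truncPow, indicator]

end Expectation

theorem stmt2_general {Ω : Type*} [MeasurableSpace Ω] (P : Measure Ω) [IsProbabilityMeasure P]
    (a b : ℝ) (X : Ω → ℝ) (hX : Measurable X)
    (hbd : ∀ᵐ ω ∂P, X ω ∈ Set.Icc a b)
    (F : ℕ → ℝ → ℝ)
    (hF1 : ∀ η : ℝ, F 1 η = (P {ω | X ω ≤ η}).toReal)
    (hFrec : ∀ j : ℕ, 1 ≤ j → ∀ η : ℝ, F (j + 1) η = ∫ α in Set.Iic η, F j α)
    (k : ℕ) (hk : 2 ≤ k) (η : ℝ) :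
    F k η = (1 / (Nat.factorial (k - 1) : ℝ)) * ∫ ω, (max (η - X ω) 0) ^ (k - 1) ∂P := by
  have ha : ∀ᵐ ω ∂P, a ≤ X ω := hbd.mono fun ω hω => hω.1
  have hF : ∀ n η, F (n + 1) η = ∫ ω, truncPow n (X ω) η ∂P := by
    intro n
    induction n with
    | zero => exact fun η => (hF1 η).trans (measureReal_le_eq_integral_truncPow_zero hX η)
    | succ n ih =>
      intro η
      rw [hFrec (n + 1) (by omega), ← setIntegral_Iic_integral_truncPow_comp hX ha n η]
      exact setIntegral_congr_fun measurableSet_Iic fun α _ => ih α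
  obtain ⟨n, rfl⟩ : ∃ n, k = n + 2 := ⟨k - 2, by omega⟩
  rw [show n + 2 - 1 = n + 1 by omega, hF, integral_congr_ae
    (ae_of_all _ fun ω => truncPow.succ_apply n (X ω) η), integral_div]
  ring

/-- For the recursively defined `k`-th order distribution functions
`F₁(X; η) = P(X ≤ η)`, `F_k(X; η) = ∫_{-∞}^η F_{k-1}(X; α) dα`, one has
`F_k(X; η) = (1/(k-1)!) E[((η - X)₊)^(k-1)]` for all `k ≥ 2`. -/
theorem stmt2 {Ω : Type*} [MeasurableSpace Ω] (P : Measure Ω) [IsProbabilityMeasure P]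
    (a b : ℝ) (hab : a ≤ b) (X : Ω → ℝ) (hX : Measurable X)
    (hbd : ∀ᵐ ω ∂P, X ω ∈ Set.Icc a b)
    (F : ℕ → ℝ → ℝ)
    (hF1 : ∀ η : ℝ, F 1 η = (P {ω | X ω ≤ η}).toReal)
    (hFrec : ∀ j : ℕ, 1 ≤ j → ∀ η : ℝ, F (j + 1) η = ∫ α in Set.Iic η, F j α)
    (k : ℕ) (hk : 2 ≤ k) (η : ℝ) :
    F k η = (1 / (Nat.factorial (k - 1) : ℝ)) * ∫ ω, (max (η - X ω) 0) ^ (k - 1) ∂P :=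
  stmt2_general P a b X hX hbd F hF1 hFrec k hk η
end

section
/- Let a ≤ b be real numbers and let X, Y be real random variables with values in [a, b] almost surely. Then E[(η − X)₊] ≤ E[(η − Y)₊] for every η ∈ ℝ if and only if E[u(X)] ≥ E[u(Y)] for every nondecreasing concave function u : ℝ → ℝ. -/
/-!
Testing with `u x = -(η - x)₊` gives `⇐`. For `⇒`, replace `u` by its piecewise-linear
interpolant `g` on the grid `a = t 0 < t 1 < ⋯` of mesh `δ`: since `u` is monotone with chord
slopes at most `L` on `[a, ∞)`, `|u - g| ≤ L δ` there. Each linear piece of `g` is a ramp, i.e. a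
difference of two shortfall functions `x ↦ (η - x)₊`, so `E[g(Z)]` is a combination of the
shortfalls `E[(t i - Z)₊]`. Summation by parts turns the coefficients into the decreases of
the chord slopes, which are nonnegative by concavity; hence `E[g(Y)] ≤ E[g(X)]`, and letting
`δ → 0` gives `E[u(Y)] ≤ E[u(X)]`.
-/

open MeasureTheory Set

lemma exists_mem_Icc_succ_of_mem_Icc {α : Type*} [LinearOrder α] {t : ℕ → α} {x : α} :
    ∀ {n : ℕ}, x ∈ Icc (t 0) (t (n + 1)) → ∃ k ≤ n, x ∈ Icc (t k) (t (k + 1))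
  | 0, hx => ⟨0, le_rfl, hx⟩
  | n + 1, hx => by
    by_cases h : x ≤ t (n + 1)
    · obtain ⟨k, hk, hxk⟩ := exists_mem_Icc_succ_of_mem_Icc ⟨hx.1, h⟩
      exact ⟨k, hk.trans n.le_succ, hxk⟩
    · exact ⟨n + 1, le_rfl, (not_le.1 h).le, hx.2⟩

lemma sub_le_sum_mul_sub_of_antitone {s D : ℕ → ℝ} (hs : Antitone s) (hD : ∀ i, 0 ≤ D i)
    (n : ℕ) : s n * D n - s 0 * D 0 ≤ ∑ i ∈ Finset.range n, s i * (D (i + 1) - D i) := by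
  induction n with
  | zero => simp
  | succ n ih =>
    rw [Finset.sum_range_succ]
    nlinarith [mul_nonneg (sub_nonneg.2 (hs n.le_succ)) (hD (n + 1))]

lemma min_max_sub_eq_sub_add_max {t t' : ℝ} (h : t ≤ t') (x : ℝ) :
    min (max (x - t) 0) (t' - t) = (t' - t) - max (t' - x) 0 + max (t - x) 0 := by
  grind

lemma ConcaveOn.antitone_slope_succ {u : ℝ → ℝ} (hu : ConcaveOn ℝ univ u) {t : ℕ → ℝ}
    (ht : StrictMono t) : Antitone fun i => slope u (t i) (t (i + 1)) :=
  antitone_nat_of_succ_le fun i => by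
    simp only [slope_def_field]
    exact hu.slope_anti_adjacent trivial trivial (ht i.lt_succ_self) (ht (i + 1).lt_succ_self)

/-- The piecewise-linear interpolant of `u` at the nodes `t 0 ≤ ⋯ ≤ t n`: the `i`-th term is
the chord slope times a ramp rising from `0` to `t (i + 1) - t i` across `[t i, t (i + 1)]`. -/
noncomputable def chordInterp (u : ℝ → ℝ) (t : ℕ → ℝ) (n : ℕ) (x : ℝ) : ℝ :=
  u (t 0) + ∑ i ∈ Finset.range n,
    slope u (t i) (t (i + 1)) * min (max (x - t i) 0) (t (i + 1) - t i)

section chordInterp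

variable {u : ℝ → ℝ} {t : ℕ → ℝ} {n : ℕ}

lemma monotone_chordInterp (hu : Monotone u) : Monotone (chordInterp u t n) := by
  intro x y hxy
  unfold chordInterp
  gcongr with i
  exact (hu.monotoneOn univ).slope_nonneg trivial trivial

lemma chordInterp_node (ht : Monotone t) {k : ℕ} (hk : k ≤ n) :
    chordInterp u t n (t k) = u (t k) := by
  obtain ⟨m, rfl⟩ := Nat.exists_eq_add_of_le hk
  have below : ∀ i < k, slope u (t i) (t (i + 1)) * min (max (t k - t i) 0) (t (i + 1) - t i)
      = u (t (i + 1)) - u (t i) := by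
    intro i hi
    have : t (i + 1) - t i ≤ t k - t i := sub_le_sub_right (ht hi) _
    rw [max_eq_left (by linarith [ht i.le_succ]), min_eq_right this, mul_comm]
    exact sub_smul_slope u _ _
  have above : ∀ j, min (max (t k - t (k + j)) 0) (t (k + j + 1) - t (k + j)) = 0 := by
    intro j
    rw [max_eq_right (sub_nonpos.2 (ht (k.le_add_right j))),
      min_eq_left (sub_nonneg.2 (ht (k + j).le_succ))]
  simp only [chordInterp, Finset.sum_range_add, above, mul_zero, Finset.sum_const_zero,
    add_zero]
  rw [Finset.sum_congr rfl fun i hi => below i (Finset.mem_range.1 hi),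
    Finset.sum_range_sub (fun i => u (t i))]
  ring

lemma abs_sub_chordInterp_le (hu : Monotone u) (ht : Monotone t) {e : ℝ}
    (he : ∀ k ≤ n, u (t (k + 1)) - u (t k) ≤ e) {x : ℝ} (hx : x ∈ Icc (t 0) (t (n + 1))) :
    |u x - chordInterp u t (n + 1) x| ≤ e := by
  obtain ⟨k, hk, hxk⟩ := exists_mem_Icc_succ_of_mem_Icc hx
  have hg := monotone_chordInterp (t := t) (n := n + 1) hu
  have left := chordInterp_node (u := u) ht (hk.trans n.le_succ)
  have right := chordInterp_node (u := u) ht (Nat.succ_le_succ hk)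
  have := he k hk
  rw [abs_le]
  constructor <;> linarith [hu hxk.1, hu hxk.2, hg hxk.1, hg hxk.2]

end chordInterp

section integral

variable {Ω : Type*} [MeasurableSpace Ω] {μ : Measure Ω} {Z : Ω → ℝ}

lemma integrable_comp_of_monotone [IsFiniteMeasure μ] {f : ℝ → ℝ} (hf : Monotone f)
    (hZ : Measurable Z) {a b : ℝ} (hZab : ∀ᵐ ω ∂μ, Z ω ∈ Icc a b) :
    Integrable (fun ω => f (Z ω)) μ := by
  refine Integrable.mono' (integrable_const (max |f a| |f b|))
    (hf.measurable.comp hZ).aestronglyMeasurable ?_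
  filter_upwards [hZab] with ω hω
  exact abs_le_max_abs_abs (hf hω.1) (hf hω.2)

lemma integrable_max_sub_zero [IsFiniteMeasure μ] (hZ : Measurable Z) {a : ℝ}
    (hZa : ∀ᵐ ω ∂μ, a ≤ Z ω) (η : ℝ) : Integrable (fun ω => max (η - Z ω) 0) μ := by
  refine Integrable.mono' (integrable_const (max (η - a) 0))
    ((measurable_const.sub hZ).max measurable_const).aestronglyMeasurable ?_
  filter_upwards [hZa] with ω hω
  rw [Real.norm_eq_abs, abs_of_nonneg (le_max_right _ _)]
  exact max_le_max (by linarith) le_rfl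

lemma abs_integral_comp_sub_le [IsProbabilityMeasure μ] {f g : ℝ → ℝ} {s : Set ℝ} {e : ℝ}
    (hf : Integrable (fun ω => f (Z ω)) μ) (hg : Integrable (fun ω => g (Z ω)) μ)
    (hZ : ∀ᵐ ω ∂μ, Z ω ∈ s) (hfg : ∀ x ∈ s, |f x - g x| ≤ e) :
    |∫ ω, f (Z ω) ∂μ - ∫ ω, g (Z ω) ∂μ| ≤ e := by
  rw [← integral_sub hf hg]
  simpa using norm_integral_le_of_norm_le_const
    (hZ.mono fun ω h => (Real.norm_eq_abs _).trans_le (hfg _ h))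

lemma integral_chordInterp [IsProbabilityMeasure μ] (u : ℝ → ℝ) {t : ℕ → ℝ} (ht : Monotone t)
    (n : ℕ) (hZ : Measurable Z) (hZa : ∀ᵐ ω ∂μ, t 0 ≤ Z ω) :
    ∫ ω, chordInterp u t n (Z ω) ∂μ = u (t 0) + ∑ i ∈ Finset.range n,
      slope u (t i) (t (i + 1)) * ((t (i + 1) - t i) - ∫ ω, max (t (i + 1) - Z ω) 0 ∂μ
        + ∫ ω, max (t i - Z ω) 0 ∂μ) := by
  have hint := integrable_max_sub_zero hZ hZa
  have hramp : ∀ i, Integrable (fun ω =>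
      (t (i + 1) - t i) - max (t (i + 1) - Z ω) 0 + max (t i - Z ω) 0) μ :=
    fun i => ((integrable_const _).sub (hint _)).add (hint _)
  simp only [chordInterp, min_max_sub_eq_sub_add_max (ht (Nat.le_succ _))]
  rw [integral_add (integrable_const _) (integrable_finsetSum _ fun i _ =>
      (hramp i).const_mul _), integral_const, probReal_univ, one_smul,
    integral_finsetSum _ fun i _ => (hramp i).const_mul _]
  congr 1
  refine Finset.sum_congr rfl fun i _ => ?_
  have hsub : Integrable (fun ω => (t (i + 1) - t i) - max (t (i + 1) - Z ω) 0) μ :=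
    (integrable_const _).sub (hint _)
  rw [integral_const_mul, integral_add hsub (hint _),
    integral_sub (integrable_const _) (hint _), integral_const, probReal_univ, one_smul]

end integral

lemma integral_chordInterp_le {Ω₁ Ω₂ : Type*} [MeasurableSpace Ω₁] [MeasurableSpace Ω₂]
    {P : Measure Ω₁} {Q : Measure Ω₂} [IsProbabilityMeasure P] [IsProbabilityMeasure Q]
    {X : Ω₁ → ℝ} {Y : Ω₂ → ℝ} (hX : Measurable X) (hY : Measurable Y) {u : ℝ → ℝ}
    (hu : Monotone u) (hc : ConcaveOn ℝ univ u) {t : ℕ → ℝ} (ht : StrictMono t) (n : ℕ)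
    (hXa : ∀ᵐ ω ∂P, t 0 ≤ X ω) (hYa : ∀ᵐ ω ∂Q, t 0 ≤ Y ω)
    (h : ∀ η : ℝ, ∫ ω, max (η - X ω) 0 ∂P ≤ ∫ ω, max (η - Y ω) 0 ∂Q) :
    ∫ ω, chordInterp u t n (Y ω) ∂Q ≤ ∫ ω, chordInterp u t n (X ω) ∂P := by
  rw [integral_chordInterp u ht.monotone n hY hYa, integral_chordInterp u ht.monotone n hX hXa]
  set s := fun i => slope u (t i) (t (i + 1))
  set D := fun i => ∫ ω, max (t i - Y ω) 0 ∂Q - ∫ ω, max (t i - X ω) 0 ∂P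
  have hs : ∀ i, 0 ≤ s i := fun i => (hu.monotoneOn univ).slope_nonneg trivial trivial
  have hD : ∀ i, 0 ≤ D i := fun i => sub_nonneg.2 (h (t i))
  have hD0 : D 0 ≤ 0 := by
    have hY0 : ∫ ω, max (t 0 - Y ω) 0 ∂Q = 0 :=
      integral_eq_zero_of_ae (hYa.mono fun ω hω => max_eq_right (sub_nonpos.2 hω))
    simp only [D, hY0, zero_sub, neg_nonpos]
    exact integral_nonneg fun ω => le_max_right _ _
  have hsum := sub_le_sum_mul_sub_of_antitone (hc.antitone_slope_succ ht) hD n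
  have hdiff : (u (t 0) + ∑ i ∈ Finset.range n, s i * ((t (i + 1) - t i)
        - ∫ ω, max (t (i + 1) - X ω) 0 ∂P + ∫ ω, max (t i - X ω) 0 ∂P))
      - (u (t 0) + ∑ i ∈ Finset.range n, s i * ((t (i + 1) - t i)
        - ∫ ω, max (t (i + 1) - Y ω) 0 ∂Q + ∫ ω, max (t i - Y ω) 0 ∂Q))
      = ∑ i ∈ Finset.range n, s i * (D (i + 1) - D i) := by
    rw [add_sub_add_left_eq_sub, ← Finset.sum_sub_distrib]
    exact Finset.sum_congr rfl fun i _ => by ring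
  linarith [mul_nonneg (hs n) (hD n), mul_nonpos_of_nonneg_of_nonpos (hs 0) hD0]

lemma exists_chordInterp_approx {u : ℝ → ℝ} (hu : Monotone u) (hc : ConcaveOn ℝ univ u)
    (a b : ℝ) {ε : ℝ} (hε : 0 < ε) : ∃ (t : ℕ → ℝ) (n : ℕ), StrictMono t ∧ t 0 = a ∧
      ∀ x ∈ Icc a b, |u x - chordInterp u t n x| ≤ ε := by
  -- By concavity, `L` bounds every chord slope of `u` to the right of `a`.
  set L := slope u (a - 1) a
  have hL : 0 ≤ L := (hu.monotoneOn univ).slope_nonneg trivial trivial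
  set δ := ε / (L + 1)
  have hδ : 0 < δ := div_pos hε (by linarith)
  have hδL : δ * L ≤ ε := by
    rw [div_mul_eq_mul_div, div_le_iff₀ (by linarith)]
    nlinarith
  set t : ℕ → ℝ := fun k => a + k * δ
  have ht : StrictMono t := fun i j hij => by
    simp only [t]
    gcongr
  set n := ⌈(b - a) / δ⌉₊
  refine ⟨t, n + 1, ht, by simp [t], fun x hx => abs_sub_chordInterp_le hu ht.monotone
    (fun k _ => ?_) ⟨by simpa [t] using hx.1, ?_⟩⟩
  · have hslope : slope u (t k) (t (k + 1)) ≤ L := by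
      calc slope u (t k) (t (k + 1)) ≤ slope u (t 0) (t 1) :=
            hc.antitone_slope_succ ht k.zero_le
        _ ≤ L := by
          have := hc.slope_anti_adjacent (x := a - 1) (y := a) (z := a + δ) trivial trivial
            (by linarith) (by linarith)
          simpa [L, t, slope_def_field] using this
    have hstep : t (k + 1) - t k = δ := by simp only [t]; push_cast; ring
    calc u (t (k + 1)) - u (t k) = δ * slope u (t k) (t (k + 1)) := by
          rw [← hstep]; exact (sub_smul_slope u _ _).symm
      _ ≤ δ * L := by gcongr
      _ ≤ ε := hδL
  · have : b - a ≤ n * δ := (div_le_iff₀ hδ).1 (Nat.le_ceil _)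
    simp only [t]
    push_cast
    nlinarith [hx.2]

lemma monotone_neg_max_sub_zero (η : ℝ) : Monotone fun x : ℝ => -max (η - x) 0 :=
  fun x y hxy => by dsimp only; gcongr

lemma concaveOn_neg_max_sub_zero (η : ℝ) : ConcaveOn ℝ univ fun x : ℝ => -max (η - x) 0 :=
  ((convexOn_const η convex_univ).sub (concaveOn_id convex_univ)).sup
    (convexOn_const 0 convex_univ) |>.neg

theorem stmt11_general {Ω₁ Ω₂ : Type*} [MeasurableSpace Ω₁] [MeasurableSpace Ω₂]
    (P : Measure Ω₁) (Q : Measure Ω₂) [IsProbabilityMeasure P] [IsProbabilityMeasure Q]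
    (a b : ℝ)
    (X : Ω₁ → ℝ) (Y : Ω₂ → ℝ) (hX : Measurable X) (hY : Measurable Y)
    (hXab : ∀ᵐ ω ∂P, X ω ∈ Set.Icc a b) (hYab : ∀ᵐ ω ∂Q, Y ω ∈ Set.Icc a b) :
    (∀ η : ℝ, (∫ ω, max (η - X ω) 0 ∂P) ≤ ∫ ω, max (η - Y ω) 0 ∂Q) ↔
    (∀ u : ℝ → ℝ, Monotone u → ConcaveOn ℝ Set.univ u →
      (∫ ω, u (Y ω) ∂Q) ≤ ∫ ω, u (X ω) ∂P) := by
  constructor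
  · intro h u hu hc
    refine le_of_forall_pos_le_add fun ε hε => ?_
    obtain ⟨t, n, ht, rfl, happrox⟩ := exists_chordInterp_approx hu hc a b (half_pos hε)
    have hg := monotone_chordInterp (t := t) (n := n) hu
    have hYg := abs_integral_comp_sub_le (integrable_comp_of_monotone hu hY hYab)
      (integrable_comp_of_monotone hg hY hYab) hYab happrox
    have hXg := abs_integral_comp_sub_le (integrable_comp_of_monotone hu hX hXab)
      (integrable_comp_of_monotone hg hX hXab) hXab happrox
    have hcmp := integral_chordInterp_le hX hY hu hc ht n (hXab.mono fun _ hω => hω.1)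
      (hYab.mono fun _ hω => hω.1) h
    rw [abs_le] at hYg hXg
    linarith [hYg.2, hXg.1]
  · intro h η
    have := h _ (monotone_neg_max_sub_zero η) (concaveOn_neg_max_sub_zero η)
    rw [integral_neg, integral_neg] at this
    linarith

/-- Utility-function characterization of second-order stochastic dominance:
`E[(η - X)₊] ≤ E[(η - Y)₊]` for every `η` iff `E[u(X)] ≥ E[u(Y)]` for every
nondecreasing concave `u : ℝ → ℝ`. -/
theorem stmt11 {Ω₁ Ω₂ : Type*} [MeasurableSpace Ω₁] [MeasurableSpace Ω₂]
    (P : Measure Ω₁) (Q : Measure Ω₂) [IsProbabilityMeasure P] [IsProbabilityMeasure Q]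
    (a b : ℝ) (hab : a ≤ b)
    (X : Ω₁ → ℝ) (Y : Ω₂ → ℝ) (hX : Measurable X) (hY : Measurable Y)
    (hXab : ∀ᵐ ω ∂P, X ω ∈ Set.Icc a b) (hYab : ∀ᵐ ω ∂Q, Y ω ∈ Set.Icc a b) :
    (∀ η : ℝ, (∫ ω, max (η - X ω) 0 ∂P) ≤ ∫ ω, max (η - Y ω) 0 ∂Q) ↔
    (∀ u : ℝ → ℝ, Monotone u → ConcaveOn ℝ Set.univ u →
      (∫ ω, u (Y ω) ∂Q) ≤ ∫ ω, u (X ω) ∂P) :=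
  stmt11_general P Q a b X Y hX hY hXab hYab
end
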